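/- arXiv:2312.17623 — 3 statements merged into one kernel-verified Lean document; each statement's English description precedes it below -/
import Mathlib

section
/- If a treatment choice problem with Gaussian data exhibits nontrivial partial identification, then every decision rule is welfare-admissible: for every Borel-measurable d : ℝⁿ → [0,1] there is no Borel-measurable d′ : ℝⁿ → [0,1] such that U(θ)·E_{m(θ)}[d′(Y)] ≥ U(θ)·E_{m(θ)}[d(Y)] for all θ ∈ Θ with strict inequality for at least one θ ∈ Θ (equivalently, no d′ whose expected welfare E_{m(θ)}[W₀(θ) + U(θ)·d′(Y)] weakly dominates that of d everywhere and strictly dominates it somewhere). -/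
/-! Weak dominance of `d` by `d'` gives `E_μ[d] ≤ E_μ[d']` where some `U θ > 0` and the reverse
inequality where some `U θ < 0`; under partial identification both happen at every mean `μ` of the
open set, so the two expected rules agree there. Along a line `μ₀ + t v`, the exponential tilt
`φ_{μ₀+tv}(y) = exp (t ⟪y - μ₀, Σ⁻¹ v⟫ - t² ⟪v, Σ⁻¹ v⟫ / 2) φ_{μ₀}(y)` writes `E_{μ₀+tv}[d]` as a
nonvanishing factor times the moment generating function of `⟪Y - μ₀, Σ⁻¹ v⟫` under the finite
measure `d · N(μ₀, Σ)`. Gaussian tails make it finite, hence real-analytic, on all of `ℝ`, so by the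
identity theorem the expectations agree at every mean, and strict dominance is impossible. -/

open MeasureTheory Matrix Set

noncomputable section

/-- Density of the multivariate normal distribution `N(μ, S)` on `ℝⁿ`. -/
def gaussPdf (n : ℕ) (S : Matrix (Fin n) (Fin n) ℝ) (μ : Fin n → ℝ) (y : Fin n → ℝ) : ℝ :=
  (Real.sqrt ((2 * Real.pi) ^ n * S.det))⁻¹ *
    Real.exp (-(1 / 2) * ((y - μ) ⬝ᵥ (S⁻¹ *ᵥ (y - μ))))

/-- The multivariate normal distribution `N(μ, S)` on `ℝⁿ`. -/
def gaussMeasure (n : ℕ) (S : Matrix (Fin n) (Fin n) ℝ) (μ : Fin n → ℝ) :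
    Measure (Fin n → ℝ) :=
  volume.withDensity fun y => ENNReal.ofReal (gaussPdf n S μ y)

/-- A decision rule: a Borel measurable map into `[0,1]`. -/
def IsRule (n : ℕ) (d : (Fin n → ℝ) → ℝ) : Prop :=
  Measurable d ∧ ∀ y, d y ∈ Set.Icc (0 : ℝ) 1

theorem Matrix.PosDef.exists_pos_mul_sum_sq_le {ι : Type*} [Fintype ι] {A : Matrix ι ι ℝ}
    (hA : A.PosDef) : ∃ α > 0, ∀ x : ι → ℝ, α * ∑ i, x i ^ 2 ≤ x ⬝ᵥ (A *ᵥ x) := by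
  rcases isEmpty_or_nonempty ι with hι | hι
  · exact ⟨1, one_pos, fun x => by simp⟩
  set f : EuclideanSpace ℝ ι → ℝ := fun u => u.ofLp ⬝ᵥ (A *ᵥ u.ofLp)
  obtain ⟨u₀, hu₀, hmin⟩ := (isCompact_sphere (0 : EuclideanSpace ℝ ι) 1).exists_isMinOn
    (NormedSpace.sphere_nonempty.2 zero_le_one) (by fun_prop : Continuous f).continuousOn
  have hu₀ : u₀.ofLp ≠ 0 := fun h => by
    simp [show u₀ = 0 from WithLp.ofLp_injective 2 h] at hu₀
  refine ⟨f u₀, by simpa using hA.dotProduct_mulVec_pos hu₀, fun x => ?_⟩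
  rcases eq_or_ne x 0 with rfl | hx
  · simp
  set r := ‖WithLp.toLp 2 x‖
  have hr : 0 < r := norm_pos_iff.2 (by simpa using hx)
  have hsum : ∑ i, x i ^ 2 = r ^ 2 := by simp [r, EuclideanSpace.real_norm_sq_eq]
  have hmem : r⁻¹ • WithLp.toLp 2 x ∈ Metric.sphere (0 : EuclideanSpace ℝ ι) 1 := by
    simp [norm_smul, r, hr.ne']
  have hscale : f (r⁻¹ • WithLp.toLp 2 x) = (r ^ 2)⁻¹ * (x ⬝ᵥ (A *ᵥ x)) := by
    simp only [f, WithLp.ofLp_smul, mulVec_smul, dotProduct_smul, smul_dotProduct, smul_eq_mul]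
    ring
  have h : f u₀ ≤ (r ^ 2)⁻¹ * (x ⬝ᵥ (A *ᵥ x)) := hscale ▸ hmin hmem
  rw [hsum, mul_comm]
  rwa [le_inv_mul_iff₀ (by positivity)] at h

theorem integrable_exp_neg_mul_sum_sq_sub {ι : Type*} [Fintype ι] {β : ℝ} (hβ : 0 < β)
    (μ : ι → ℝ) : Integrable fun y : ι → ℝ => Real.exp (-β * ∑ i, (y i - μ i) ^ 2) := by
  simp_rw [Finset.mul_sum, Real.exp_sum]
  exact Integrable.fintype_prod fun i => (integrable_exp_neg_mul_sq hβ).comp_sub_right (μ i)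

theorem Matrix.IsHermitian.dotProduct_mulVec_comm {ι : Type*} [Fintype ι] {A : Matrix ι ι ℝ}
    (hA : A.IsHermitian) (x y : ι → ℝ) : x ⬝ᵥ (A *ᵥ y) = y ⬝ᵥ (A *ᵥ x) := by
  have hAt : Aᵀ = A := by rw [← conjTranspose_eq_transpose_of_trivial]; exact hA.eq
  rw [dotProduct_mulVec, ← mulVec_transpose, hAt, dotProduct_comm]

theorem analyticOnNhd_integral_mul_exp_mul {Ω : Type*} [MeasurableSpace Ω] {μ : Measure Ω}
    {f X : Ω → ℝ} (hfm : Measurable f) (hf : ∀ ω, 0 ≤ f ω)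
    (hint : ∀ t, Integrable (fun ω => f ω * Real.exp (t * X ω)) μ) :
    AnalyticOnNhd ℝ (fun t => ∫ ω, f ω * Real.exp (t * X ω) ∂μ) univ := by
  set ν := μ.withDensity fun ω => ((f ω).toNNReal : ENNReal)
  have hsmul : ∀ g : Ω → ℝ, (fun ω => (f ω).toNNReal • g ω) = fun ω => f ω * g ω := fun g => by
    simp only [NNReal.smul_def, Real.coe_toNNReal _ (hf _), smul_eq_mul]
  have hset : ProbabilityTheory.integrableExpSet X ν = univ :=
    eq_univ_of_forall fun t => (integrable_withDensity_iff_integrable_smul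
      hfm.real_toNNReal).2 (by rw [hsmul]; exact hint t)
  have hmgf := ProbabilityTheory.analyticOnNhd_mgf (X := X) (μ := ν)
  rw [hset, interior_univ] at hmgf
  convert hmgf using 2 with t
  rw [ProbabilityTheory.mgf, integral_withDensity_eq_integral_smul hfm.real_toNNReal, hsmul]

section Gaussian

variable {n : ℕ} {S : Matrix (Fin n) (Fin n) ℝ}

theorem gaussPdf_nonneg (μ y : Fin n → ℝ) : 0 ≤ gaussPdf n S μ y := by
  unfold gaussPdf; positivity

theorem continuous_gaussPdf (μ : Fin n → ℝ) : Continuous (gaussPdf n S μ) := by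
  unfold gaussPdf; fun_prop

theorem gaussPdf_add_smul (hS : S.IsHermitian) (μ v y : Fin n → ℝ) (t : ℝ) :
    gaussPdf n S (μ + t • v) y =
      Real.exp (t * ((y - μ) ⬝ᵥ (S⁻¹ *ᵥ v)) - t ^ 2 / 2 * (v ⬝ᵥ (S⁻¹ *ᵥ v))) *
        gaussPdf n S μ y := by
  have hexp : (y - (μ + t • v)) ⬝ᵥ (S⁻¹ *ᵥ (y - (μ + t • v))) =
      (y - μ) ⬝ᵥ (S⁻¹ *ᵥ (y - μ)) - 2 * t * ((y - μ) ⬝ᵥ (S⁻¹ *ᵥ v)) +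
        t ^ 2 * (v ⬝ᵥ (S⁻¹ *ᵥ v)) := by
    rw [show y - (μ + t • v) = (y - μ) - t • v by abel]
    simp only [mulVec_sub, mulVec_smul, sub_dotProduct, dotProduct_sub, smul_dotProduct,
      dotProduct_smul, smul_eq_mul]
    rw [hS.inv.dotProduct_mulVec_comm v y, hS.inv.dotProduct_mulVec_comm v μ]
    ring
  simp only [gaussPdf, hexp]
  rw [mul_left_comm, ← Real.exp_add]
  ring_nf

theorem integral_gaussMeasure (μ : Fin n → ℝ) (g : (Fin n → ℝ) → ℝ) :
    ∫ y, g y ∂gaussMeasure n S μ = ∫ y, gaussPdf n S μ y * g y := by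
  rw [gaussMeasure, show (fun y => ENNReal.ofReal (gaussPdf n S μ y)) =
    fun y => ((gaussPdf n S μ y).toNNReal : ENNReal) from rfl,
    integral_withDensity_eq_integral_smul (continuous_gaussPdf μ).measurable.real_toNNReal]
  simp only [NNReal.smul_def, Real.coe_toNNReal _ (gaussPdf_nonneg μ _), smul_eq_mul]

theorem integrable_gaussPdf (hS : S.PosDef) (μ : Fin n → ℝ) : Integrable (gaussPdf n S μ) := by
  obtain ⟨α, hα, hquad⟩ := hS.inv.exists_pos_mul_sum_sq_le
  refine ((integrable_exp_neg_mul_sum_sq_sub (half_pos hα) μ).const_mul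
    (Real.sqrt ((2 * Real.pi) ^ n * S.det))⁻¹).mono' (continuous_gaussPdf μ).aestronglyMeasurable
    (.of_forall fun y => ?_)
  rw [Real.norm_of_nonneg (gaussPdf_nonneg μ y), gaussPdf]
  have := hquad (y - μ)
  simp only [Pi.sub_apply] at this
  exact mul_le_mul_of_nonneg_left (Real.exp_le_exp.2 (by linarith)) (by positivity)

theorem IsRule.integrable_gaussPdf_mul (hS : S.PosDef) {d : (Fin n → ℝ) → ℝ} (hd : IsRule n d)
    (μ : Fin n → ℝ) : Integrable fun y => gaussPdf n S μ y * d y :=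
  (integrable_gaussPdf hS μ).mul_bdd hd.1.aestronglyMeasurable
    (.of_forall fun y => by rw [Real.norm_of_nonneg (hd.2 y).1]; exact (hd.2 y).2)

theorem integral_gaussMeasure_eq_of_eqOn_isOpen (hS : S.PosDef) {d d' : (Fin n → ℝ) → ℝ}
    (hd : IsRule n d) (hd' : IsRule n d')
    {O : Set (Fin n → ℝ)} (hO : IsOpen O) (hne : O.Nonempty)
    (heq : ∀ μ ∈ O, ∫ y, d y ∂gaussMeasure n S μ = ∫ y, d' y ∂gaussMeasure n S μ)
    (μ : Fin n → ℝ) : ∫ y, d y ∂gaussMeasure n S μ = ∫ y, d' y ∂gaussMeasure n S μ := by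
  obtain ⟨μ₀, hμ₀⟩ := hne
  set v := μ - μ₀
  set b : (Fin n → ℝ) → ℝ := fun y => (y - μ₀) ⬝ᵥ (S⁻¹ *ᵥ v)
  set a := v ⬝ᵥ (S⁻¹ *ᵥ v)
  set Φ : ((Fin n → ℝ) → ℝ) → ℝ → ℝ := fun f t =>
    ∫ y, gaussPdf n S μ₀ y * f y * Real.exp (t * b y)
  have hmul : ∀ (f : (Fin n → ℝ) → ℝ) (t : ℝ) y, gaussPdf n S (μ₀ + t • v) y * f y =
      Real.exp (-(t ^ 2 / 2 * a)) * (gaussPdf n S μ₀ y * f y * Real.exp (t * b y)) := by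
    intro f t y
    rw [gaussPdf_add_smul hS.isHermitian, sub_eq_add_neg, Real.exp_add]
    ring
  have htilt : ∀ (f : (Fin n → ℝ) → ℝ) (t : ℝ), ∫ y, f y ∂gaussMeasure n S (μ₀ + t • v) =
      Real.exp (-(t ^ 2 / 2 * a)) * Φ f t := by
    intro f t
    simp only [integral_gaussMeasure, hmul, Φ, integral_const_mul]
  have hΦ : ∀ f, IsRule n f → AnalyticOnNhd ℝ (Φ f) univ := by
    intro f hf
    refine analyticOnNhd_integral_mul_exp_mul ((continuous_gaussPdf μ₀).measurable.mul hf.1)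
      (fun y => mul_nonneg (gaussPdf_nonneg μ₀ y) (hf.2 y).1) fun t => ?_
    refine ((hf.integrable_gaussPdf_mul hS (μ₀ + t • v)).const_mul
      (Real.exp (t ^ 2 / 2 * a))).congr (.of_forall fun y => ?_)
    simp only [hmul, ← mul_assoc, ← Real.exp_add, add_neg_cancel, Real.exp_zero, one_mul]
  have hnear : Φ d =ᶠ[nhds 0] Φ d' := by
    have hcont : Continuous fun t : ℝ => μ₀ + t • v := by fun_prop
    filter_upwards [hcont.continuousAt.preimage_mem_nhds (by simpa using hO.mem_nhds hμ₀)]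
      with t ht
    have := heq _ ht
    rwa [htilt, htilt, mul_right_inj' (Real.exp_pos _).ne'] at this
  have h1 := congrFun ((hΦ d hd).eq_of_eventuallyEq (hΦ d' hd') hnear) 1
  have hμ : μ₀ + (1 : ℝ) • v = μ := by simp [v]
  rw [← hμ, htilt, htilt, h1]

end Gaussian

theorem everything_is_admissible_general
    (n : ℕ) (Θ : Type*) (U : Θ → ℝ) (m : Θ → Fin n → ℝ)
    (S : Matrix (Fin n) (Fin n) ℝ) (hS : S.PosDef)
    (hPI : ∃ Sop : Set (Fin n → ℝ), Sop.Nonempty ∧ IsOpen Sop ∧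
      ∀ μ ∈ Sop, (∃ θ, m θ = μ ∧ U θ < 0) ∧ (∃ θ, m θ = μ ∧ 0 < U θ))
    (d : (Fin n → ℝ) → ℝ) (hd : IsRule n d) :
    ¬ ∃ d' : (Fin n → ℝ) → ℝ, IsRule n d' ∧
      (∀ θ : Θ, U θ * ∫ y, d y ∂ gaussMeasure n S (m θ)
          ≤ U θ * ∫ y, d' y ∂ gaussMeasure n S (m θ)) ∧
      (∃ θ : Θ, U θ * ∫ y, d y ∂ gaussMeasure n S (m θ)
          < U θ * ∫ y, d' y ∂ gaussMeasure n S (m θ)) := by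
  rintro ⟨d', hd', hweak, θ, hstrict⟩
  obtain ⟨O, hne, hO, hPI⟩ := hPI
  have heq : ∀ μ ∈ O, ∫ y, d y ∂gaussMeasure n S μ = ∫ y, d' y ∂gaussMeasure n S μ := by
    intro μ hμ
    obtain ⟨⟨θn, rfl, hneg⟩, θp, hθp, hpos⟩ := hPI μ hμ
    have hp := hweak θp
    rw [hθp] at hp
    exact le_antisymm (le_of_mul_le_mul_left hp hpos)
      ((mul_le_mul_left_of_neg hneg).1 (hweak θn))
  rw [integral_gaussMeasure_eq_of_eqOn_isOpen hS hd hd' hO hne heq] at hstrict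
  exact lt_irrefl _ hstrict

/-- **Theorem 1 (everything is admissible).** If the treatment choice problem with
Gaussian data `Y ~ N(m(θ), Σ)` exhibits nontrivial partial identification, then every
decision rule is welfare-admissible: no rule `d'` weakly dominates `d` everywhere in
terms of expected welfare contrast `U(θ)·E_{m(θ)}[d(Y)]` while strictly dominating it
somewhere. -/
theorem everything_is_admissible
    (n : ℕ) (hn : 1 ≤ n) (Θ : Type*) [Nonempty Θ]
    (W0 W1 : Θ → ℝ) (U : Θ → ℝ) (hU : ∀ θ, U θ = W1 θ - W0 θ)
    (m : Θ → Fin n → ℝ)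
    (S : Matrix (Fin n) (Fin n) ℝ) (hS : S.PosDef)
    (hPI : ∃ Sop : Set (Fin n → ℝ), Sop.Nonempty ∧ IsOpen Sop ∧
      ∀ μ ∈ Sop, (∃ θ, m θ = μ ∧ U θ < 0) ∧ (∃ θ, m θ = μ ∧ 0 < U θ))
    (d : (Fin n → ℝ) → ℝ) (hd : IsRule n d) :
    ¬ ∃ d' : (Fin n → ℝ) → ℝ, IsRule n d' ∧
      (∀ θ : Θ, U θ * ∫ y, d y ∂ gaussMeasure n S (m θ)
          ≤ U θ * ∫ y, d' y ∂ gaussMeasure n S (m θ)) ∧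
      (∃ θ : Θ, U θ * ∫ y, d y ∂ gaussMeasure n S (m θ)
          < U θ * ∫ y, d' y ∂ gaussMeasure n S (m θ)) :=
  everything_is_admissible_general n Θ U m S hS hPI d hd
end
end

section
/- Suppose there exists θ ∈ Θ with U(θ) ≤ 0, and that inf_{θ∈Θ} W₀(θ) = inf_{θ∈Θ : U(θ)≤0} W₀(θ) (infima taken in the extended reals). Then the no-data rule d ≡ 0 is maximin-welfare optimal: sup over all decision rules d of inf_{θ∈Θ} E_{m(θ)}[W₀(θ) + U(θ)·d(Y)] equals inf_{θ∈Θ} E_{m(θ)}[W₀(θ) + U(θ)·0] = inf_{θ∈Θ} W₀(θ). -/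
/-!
At a state `θ` with `U θ ≤ 0`, a rule with values in `[0,1]` earns
`W₀ θ + U θ · E[d(Y)] ≤ W₀ θ`, so the worst-case welfare of every rule is at most
`inf_{U ≤ 0} W₀`, which by hypothesis is `inf W₀`, the worst-case welfare of the rule `d ≡ 0`.
The only analytic input is that `N(μ, S)` is a probability measure: the substitution
`y = μ + √S x` turns its total mass into a product of `n` one-dimensional Gaussian integrals.
-/

open MeasureTheory Matrix Set

noncomputable section

open Real MatrixOrder

section GaussianIntegral

variable {ι : Type*} [Fintype ι]

theorem exp_neg_half_dotProduct_self (x : ι → ℝ) :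
    exp (-(1 / 2) * (x ⬝ᵥ x)) = ∏ i, exp (-(1 / 2) * x i ^ 2) := by
  simp only [dotProduct, Finset.mul_sum, ← exp_sum, sq]

theorem lintegral_exp_neg_half_dotProduct_self :
    ∫⁻ x : ι → ℝ, ENNReal.ofReal (exp (-(1 / 2) * (x ⬝ᵥ x)))
      = ENNReal.ofReal (√(2 * π) ^ Fintype.card ι) := by
  have hint : Integrable fun x : ι → ℝ => ∏ i, exp (-(1 / 2) * x i ^ 2) :=
    Integrable.fintype_prod (f := fun _ t => exp (-(1 / 2) * t ^ 2))
      fun _ => integrable_exp_neg_mul_sq (by norm_num)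
  simp_rw [exp_neg_half_dotProduct_self]
  rw [← ofReal_integral_eq_lintegral_ofReal hint (ae_of_all _ fun _ => by positivity),
    integral_fintype_prod_volume_eq_pow (fun t => exp (-(1 / 2) * t ^ 2)), integral_gaussian]
  norm_num [div_div_eq_mul_div, mul_comm]

variable [DecidableEq ι]

theorem lintegral_comp_mulVec {A : Matrix ι ι ℝ} (hA : A.det ≠ 0) {f : (ι → ℝ) → ENNReal}
    (hf : Measurable f) :
    ∫⁻ x, f (A *ᵥ x) = ENNReal.ofReal |A.det⁻¹| * ∫⁻ x, f x := by
  rw [← smul_eq_mul, ← lintegral_smul_measure, ← map_matrix_volume_pi_eq_smul_volume_pi hA,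
    lintegral_map hf (toLin' A).continuous_of_finiteDimensional.measurable]
  rfl

theorem Matrix.PosDef.det_sqrt {S : Matrix ι ι ℝ} (hS : S.PosDef) :
    (CFC.sqrt S).det = √S.det := by
  simp [hS.posSemidef.det_sqrt]

theorem Matrix.PosDef.sqrt_mulVec_dotProduct_inv_mulVec {S : Matrix ι ι ℝ} (hS : S.PosDef)
    (x : ι → ℝ) : (CFC.sqrt S *ᵥ x) ⬝ᵥ (S⁻¹ *ᵥ (CFC.sqrt S *ᵥ x)) = x ⬝ᵥ x := by
  set Q := CFC.sqrt S
  have hQQ : Q * Q = S := CFC.sqrt_mul_sqrt_self S hS.posSemidef.nonneg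
  have hQT : Qᵀ = Q := (CFC.sqrt_nonneg S).posSemidef.1.eq
  have hQdet : IsUnit Q.det := by
    rw [hS.det_sqrt]
    exact (sqrt_pos.2 hS.det_pos).ne'.isUnit
  have hQSQ : Q * S⁻¹ * Q = 1 := by
    rw [← hQQ, Matrix.mul_inv_rev, ← mul_assoc, mul_nonsing_inv _ hQdet, one_mul,
      nonsing_inv_mul _ hQdet]
  rw [mulVec_mulVec, ← vecMul_transpose, ← dotProduct_mulVec, hQT, mulVec_mulVec, ← mul_assoc,
    hQSQ, one_mulVec]

theorem lintegral_exp_neg_half_dotProduct_inv_mulVec {S : Matrix ι ι ℝ} (hS : S.PosDef) :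
    ∫⁻ x, ENNReal.ofReal (exp (-(1 / 2) * (x ⬝ᵥ S⁻¹ *ᵥ x)))
      = ENNReal.ofReal √((2 * π) ^ Fintype.card ι * S.det) := by
  set g : (ι → ℝ) → ENNReal := fun x => ENNReal.ofReal (exp (-(1 / 2) * (x ⬝ᵥ S⁻¹ *ᵥ x)))
  have hg : Measurable g := by fun_prop
  have hdet : 0 < (CFC.sqrt S).det := by
    rw [hS.det_sqrt]
    exact sqrt_pos.2 hS.det_pos
  have hsubst : ∫⁻ y, g (CFC.sqrt S *ᵥ y)
      = ENNReal.ofReal (CFC.sqrt S).det⁻¹ * ∫⁻ x, g x := by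
    rw [lintegral_comp_mulVec hdet.ne' hg, abs_of_pos (inv_pos.2 hdet)]
  simp only [g, hS.sqrt_mulVec_dotProduct_inv_mulVec, lintegral_exp_neg_half_dotProduct_self]
    at hsubst
  have hpow : √((2 * π) ^ Fintype.card ι) = √(2 * π) ^ Fintype.card ι := by
    rw [sqrt_eq_iff_mul_self_eq (by positivity) (by positivity), ← mul_pow,
      mul_self_sqrt (by positivity)]
  rw [sqrt_mul (by positivity), hpow, ← hS.det_sqrt, mul_comm, ENNReal.ofReal_mul hdet.le, hsubst,
    ← mul_assoc, ← ENNReal.ofReal_mul hdet.le, mul_inv_cancel₀ hdet.ne', ENNReal.ofReal_one,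
    one_mul]

end GaussianIntegral

theorem isProbabilityMeasure_gaussMeasure {n : ℕ} {S : Matrix (Fin n) (Fin n) ℝ} (hS : S.PosDef)
    (μ : Fin n → ℝ) : IsProbabilityMeasure (gaussMeasure n S μ) := by
  constructor
  have hc : 0 < √((2 * π) ^ n * S.det) := sqrt_pos.2 (by have := hS.det_pos; positivity)
  simp only [gaussMeasure, gaussPdf, withDensity_apply _ MeasurableSet.univ,
    Measure.restrict_univ, ENNReal.ofReal_mul (inv_nonneg.2 hc.le)]
  rw [lintegral_const_mul' _ _ ENNReal.ofReal_ne_top,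
    lintegral_sub_right_eq_self (fun x => ENNReal.ofReal (exp (-(1 / 2) * (x ⬝ᵥ S⁻¹ *ᵥ x)))) μ,
    lintegral_exp_neg_half_dotProduct_inv_mulVec hS, Fintype.card_fin,
    ← ENNReal.ofReal_mul (inv_nonneg.2 hc.le), inv_mul_cancel₀ hc.ne', ENNReal.ofReal_one]

theorem IsRule.integrable {n : ℕ} {d : (Fin n → ℝ) → ℝ} (hd : IsRule n d)
    (μ : Measure (Fin n → ℝ)) [IsFiniteMeasure μ] : Integrable d μ :=
  (integrable_const (1 : ℝ)).mono' hd.1.aestronglyMeasurable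
    (ae_of_all _ fun y => by simpa [abs_of_nonneg (hd.2 y).1] using (hd.2 y).2)

theorem integral_const_add_mul_le_of_nonpos {α : Type*} [MeasurableSpace α] {μ : Measure α}
    [IsProbabilityMeasure μ] {d : α → ℝ} (hd : Integrable d μ) (hd0 : 0 ≤ d) (w : ℝ) {u : ℝ}
    (hu : u ≤ 0) : ∫ y, (w + u * d y) ∂μ ≤ w := by
  rw [integral_add (integrable_const w) (hd.const_mul u), integral_const, integral_const_mul]
  simpa using mul_nonpos_of_nonpos_of_nonneg hu (integral_nonneg hd0)

theorem maximin_no_data_general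
    (n : ℕ) (Θ : Type*)
    (W0 : Θ → ℝ) (U : Θ → ℝ)
    (m : Θ → Fin n → ℝ)
    (S : Matrix (Fin n) (Fin n) ℝ) (hS : S.PosDef)
    (hinf : sInf (Set.range fun θ => ((W0 θ : ℝ) : EReal)) =
      sInf ((fun θ => ((W0 θ : ℝ) : EReal)) '' {θ | U θ ≤ 0})) :
    sSup {v : EReal | ∃ d : (Fin n → ℝ) → ℝ, IsRule n d ∧
        v = sInf (Set.range fun θ =>
          ((∫ y, (W0 θ + U θ * d y) ∂ gaussMeasure n S (m θ) : ℝ) : EReal))}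
      = sInf (Set.range fun θ => ((W0 θ : ℝ) : EReal)) ∧
    sInf (Set.range fun θ =>
        ((∫ y, (W0 θ + U θ * (0 : ℝ)) ∂ gaussMeasure n S (m θ) : ℝ) : EReal))
      = sInf (Set.range fun θ => ((W0 θ : ℝ) : EReal)) := by
  have hprob := fun θ => isProbabilityMeasure_gaussMeasure hS (m θ)
  have hzero : (fun θ => ((∫ y, (W0 θ + U θ * (0 : ℝ)) ∂ gaussMeasure n S (m θ) : ℝ) : EReal))
      = fun θ => ((W0 θ : ℝ) : EReal) := by
    funext θ
    simp
  refine ⟨le_antisymm (sSup_le ?_) (le_sSup ⟨0, ⟨measurable_const, fun _ => by simp⟩, ?_⟩),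
    by rw [hzero]⟩
  · rintro _ ⟨d, hd, rfl⟩
    rw [hinf]
    refine le_sInf ?_
    rintro _ ⟨θ, hθ, rfl⟩
    exact (sInf_le (mem_range_self θ)).trans <| EReal.coe_le_coe_iff.2 <|
      integral_const_add_mul_le_of_nonpos (hd.integrable _) (fun y => (hd.2 y).1) _ hθ
  · exact congrArg (fun f => sInf (range f)) hzero.symm

/-- **Theorem 2 (maximin welfare is ultra-pessimistic).** If some `θ` has `U(θ) ≤ 0` and
`inf_{θ∈Θ} W₀(θ) = inf_{θ : U(θ)≤0} W₀(θ)` (infima in the extended reals), then the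
no-data rule `d ≡ 0` is maximin-welfare optimal: the supremum over all decision rules of
the infimum (over `θ`) of expected welfare `E_{m(θ)}[W₀(θ) + U(θ)·d(Y)]` equals the
infimum of expected welfare of the zero rule, which is `inf_{θ∈Θ} W₀(θ)`. -/
theorem maximin_no_data
    (n : ℕ) (hn : 1 ≤ n) (Θ : Type*) [Nonempty Θ]
    (W0 W1 : Θ → ℝ) (U : Θ → ℝ) (hU : ∀ θ, U θ = W1 θ - W0 θ)
    (m : Θ → Fin n → ℝ)
    (S : Matrix (Fin n) (Fin n) ℝ) (hS : S.PosDef)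
    (hU0 : ∃ θ, U θ ≤ 0)
    (hinf : sInf (Set.range fun θ => ((W0 θ : ℝ) : EReal)) =
      sInf ((fun θ => ((W0 θ : ℝ) : EReal)) '' {θ | U θ ≤ 0})) :
    sSup {v : EReal | ∃ d : (Fin n → ℝ) → ℝ, IsRule n d ∧
        v = sInf (Set.range fun θ =>
          ((∫ y, (W0 θ + U θ * d y) ∂ gaussMeasure n S (m θ) : ℝ) : EReal))}
      = sInf (Set.range fun θ => ((W0 θ : ℝ) : EReal)) ∧
    sInf (Set.range fun θ =>
        ((∫ y, (W0 θ + U θ * (0 : ℝ)) ∂ gaussMeasure n S (m θ) : ℝ) : EReal))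
      = sInf (Set.range fun θ => ((W0 θ : ℝ) : EReal)) :=
  maximin_no_data_general n Θ W0 U m S hS hinf
end
end

section
/- Suppose the problem exhibits nontrivial partial identification and Assumption L holds, let w ∈ ℝⁿ be nonzero, and assume k̄_w(γ) is finite for every γ ∈ Γ_w. Then Γ_w is symmetric about 0 (γ ∈ Γ_w ⇒ −γ ∈ Γ_w), 0 lies in the interior of Γ_w, and the superdifferential ∂k̄_w(0) := {s ∈ ℝ : k̄_w(γ) ≤ k̄_w(0) + s·γ for all γ ∈ Γ_w} is nonempty, closed, and bounded. -/
/-!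
`k̄_w` is the value function of the concave program "maximise `U` over the fibre of `wᵀm` above
`γ`", so it is concave on `Γ_w`, the image of `Θ` under a linear map. That image is symmetric and
convex, and contains the open image of the set `S` of the identification assumption, so `0` is an
interior point. A concave function of one variable at an interior point has a supporting line whose
slope is its one-sided derivative, and every supporting slope is squeezed between the secant slopes
to points of `Γ_w` on either side of `0`.
-/

open Matrix Set

noncomputable section

/-- `Γ_w`, the image of `θ ↦ wᵀ m(θ)` over `Θ`. -/
def Gam {V : Type*} (n : ℕ) (m : V → Fin n → ℝ) (Θ : Set V) (w : Fin n → ℝ) : Set ℝ :=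
  (fun θ => w ⬝ᵥ m θ) '' Θ

/-- `k̄_w(γ) = sup{U(θ) : θ ∈ Θ, wᵀ m(θ) = γ}`. -/
def kbar {V : Type*} (n : ℕ) (U : V → ℝ) (m : V → Fin n → ℝ) (Θ : Set V)
    (w : Fin n → ℝ) (γ : ℝ) : ℝ :=
  sSup (U '' {θ ∈ Θ | w ⬝ᵥ m θ = γ})

/-- The superdifferential `∂k̄_w(0)` of `k̄_w` at `0`. -/
def superdiff {V : Type*} (n : ℕ) (U : V → ℝ) (m : V → Fin n → ℝ) (Θ : Set V)
    (w : Fin n → ℝ) : Set ℝ :=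
  {s : ℝ | ∀ γ ∈ Gam n m Θ w, kbar n U m Θ w γ ≤ kbar n U m Θ w 0 + s * γ}

/-- Nontrivial partial identification. -/
def PartialId {V : Type*} (n : ℕ) (U : V → ℝ) (m : V → Fin n → ℝ) (Θ : Set V) : Prop :=
  ∃ Sop : Set (Fin n → ℝ), Sop.Nonempty ∧ IsOpen Sop ∧
    ∀ μ ∈ Sop, (∃ θ ∈ Θ, m θ = μ ∧ U θ < 0) ∧ (∃ θ ∈ Θ, m θ = μ ∧ 0 < U θ)

section ValueFunction

variable {V F : Type*} [AddCommGroup V] [Module ℝ V] [AddCommGroup F] [Module ℝ F]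

theorem ConcaveOn.concaveOn_sSup_image_fiber {Θ : Set V} {U : V → ℝ} (hU : ConcaveOn ℝ Θ U)
    (L : V →ₗ[ℝ] F) (hbdd : ∀ γ ∈ L '' Θ, BddAbove (U '' {θ ∈ Θ | L θ = γ})) :
    ConcaveOn ℝ (L '' Θ) fun γ => sSup (U '' {θ ∈ Θ | L θ = γ}) := by
  refine ⟨hU.1.linear_image L, ?_⟩
  rintro _ ⟨θx, hθx, rfl⟩ _ ⟨θy, hθy, rfl⟩ a b ha hb hab
  have hfiber_nonempty : ∀ θ₀ ∈ Θ, (U '' {θ ∈ Θ | L θ = L θ₀}).Nonempty :=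
    fun θ₀ hθ₀ => ⟨U θ₀, θ₀, ⟨hθ₀, rfl⟩, rfl⟩
  have hA := hfiber_nonempty θx hθx
  have hB := hfiber_nonempty θy hθy
  have hA_bdd := hbdd _ ⟨θx, hθx, rfl⟩
  have hB_bdd := hbdd _ ⟨θy, hθy, rfl⟩
  rw [← Real.sSup_smul_of_nonneg ha, ← Real.sSup_smul_of_nonneg hb,
    ← csSup_add hA.smul_set (hA_bdd.smul_of_nonneg ha) hB.smul_set (hB_bdd.smul_of_nonneg hb)]
  refine csSup_le (hA.smul_set.add hB.smul_set) ?_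
  rintro _ ⟨_, ⟨_, ⟨θ, ⟨hθ, hLθ⟩, rfl⟩, rfl⟩, _, ⟨_, ⟨θ', ⟨hθ', hLθ'⟩, rfl⟩, rfl⟩, rfl⟩
  have hmem : a • θ + b • θ' ∈ {θ ∈ Θ | L θ = a • L θx + b • L θy} :=
    ⟨hU.1 hθ hθ' ha hb hab, by simp [hLθ, hLθ']⟩
  calc a • U θ + b • U θ' ≤ U (a • θ + b • θ') := hU.2 hθ hθ' ha hb hab
    _ ≤ _ := le_csSup (hbdd _ ⟨a • θx + b • θy, hU.1 hθx hθy ha hb hab, by simp⟩) ⟨_, hmem, rfl⟩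

end ValueFunction

theorem Convex.zero_mem_interior_of_neg_mem {E : Type*} [AddCommGroup E] [Module ℝ E]
    [TopologicalSpace E] [IsTopologicalAddGroup E] [ContinuousConstSMul ℝ E] {s : Set E}
    (hs : Convex ℝ s) (hneg : ∀ x ∈ s, -x ∈ s) (hint : (interior s).Nonempty) :
    (0 : E) ∈ interior s := by
  obtain ⟨x, hx⟩ := hint
  have := hs.combo_interior_self_mem_interior hx (hneg x (interior_subset hx))
    (by norm_num : (0 : ℝ) < 1 / 2) (by norm_num : (0 : ℝ) ≤ 1 / 2) (by norm_num)
  rwa [smul_neg, add_neg_cancel] at this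

section Superdifferential

def superdifferential (f : ℝ → ℝ) (S : Set ℝ) (x : ℝ) : Set ℝ :=
  {c | ∀ y ∈ S, f y ≤ f x + c * (y - x)}

variable {f : ℝ → ℝ} {S : Set ℝ} {x : ℝ}

theorem isClosed_superdifferential (f : ℝ → ℝ) (S : Set ℝ) (x : ℝ) :
    IsClosed (superdifferential f S x) := by
  simp only [superdifferential, ofPred_forall]
  exact isClosed_biInter fun y _ => isClosed_le continuous_const (by fun_prop)

theorem superdifferential_subset_Icc {y₁ y₂ : ℝ} (hy₁ : y₁ ∈ S) (hy₂ : y₂ ∈ S) (h₁ : y₁ < x)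
    (h₂ : x < y₂) : superdifferential f S x ⊆ Icc (slope f x y₂) (slope f y₁ x) := by
  intro c hc
  have hc₁ := hc y₁ hy₁
  have hc₂ := hc y₂ hy₂
  rw [slope_def_field, slope_def_field]
  constructor
  · rw [div_le_iff₀ (sub_pos.mpr h₂)]; linarith
  · rw [le_div_iff₀ (sub_pos.mpr h₁)]; linarith

theorem isBounded_superdifferential (hx : x ∈ interior S) :
    Bornology.IsBounded (superdifferential f S x) := by
  obtain ⟨a, b, ⟨hax, hxb⟩, hab⟩ :=
    mem_nhds_iff_exists_Ioo_subset.mp (mem_interior_iff_mem_nhds.mp hx)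
  obtain ⟨y₁, hay₁, hy₁x⟩ := exists_between hax
  obtain ⟨y₂, hxy₂, hy₂b⟩ := exists_between hxb
  exact (Metric.isBounded_Icc _ _).subset <| superdifferential_subset_Icc
    (hab ⟨hay₁, hy₁x.trans hxb⟩) (hab ⟨hax.trans hxy₂, hy₂b⟩) hy₁x hxy₂

theorem ConvexOn.add_rightDeriv_mul_le (hf : ConvexOn ℝ S f) (hx : x ∈ interior S) {y : ℝ}
    (hy : y ∈ S) : f x + derivWithin f (Ioi x) x * (y - x) ≤ f y := by
  rcases lt_trichotomy y x with hyx | rfl | hxy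
  · have := (hf.slope_le_leftDeriv_of_mem_interior hy hx hyx).trans
      (hf.leftDeriv_le_rightDeriv_of_mem_interior hx)
    rw [slope_def_field, div_le_iff₀ (sub_pos.mpr hyx)] at this
    linarith
  · simp
  · have := hf.rightDeriv_le_slope_of_mem_interior hx hy hxy
    rw [slope_def_field, le_div_iff₀ (sub_pos.mpr hxy)] at this
    linarith

theorem ConcaveOn.superdifferential_nonempty (hf : ConcaveOn ℝ S f) (hx : x ∈ interior S) :
    (superdifferential f S x).Nonempty := by
  refine ⟨-derivWithin (-f) (Ioi x) x, fun y hy => ?_⟩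
  have := hf.neg.add_rightDeriv_mul_le hx hy
  simp only [Pi.neg_apply] at this
  linarith

end Superdifferential

theorem PartialId.nonempty_interior_image {V : Type*} {n : ℕ} {U : V → ℝ} {m : V → Fin n → ℝ}
    {Θ : Set V} (h : PartialId n U m Θ) : (interior (m '' Θ)).Nonempty := by
  obtain ⟨S, ⟨μ, hμ⟩, hSopen, hS⟩ := h
  refine ⟨μ, interior_maximal (fun ν hν => ?_) hSopen hμ⟩
  obtain ⟨θ, hθ, hmθ, -⟩ := (hS ν hν).1
  exact ⟨θ, hθ, hmθ⟩

theorem dotProductBilin_surjective {K ι : Type*} [Field K] [LinearOrder K]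
    [IsStrictOrderedRing K] [Fintype ι] {w : ι → K} (hw : w ≠ 0) :
    Function.Surjective (dotProductBilin K K w) :=
  LinearMap.surjective_of_ne_zero fun h =>
    hw (dotProduct_self_eq_zero.mp (LinearMap.congr_fun h w))

theorem superdiff_eq_superdifferential {V : Type*} (n : ℕ) (U : V → ℝ) (m : V → Fin n → ℝ)
    (Θ : Set V) (w : Fin n → ℝ) :
    superdiff n U m Θ w = superdifferential (kbar n U m Θ w) (Gam n m Θ w) 0 := by
  simp only [superdiff, superdifferential, sub_zero]

theorem superdifferential_properties_general
    {V : Type*} [AddCommGroup V] [Module ℝ V]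
    (n : ℕ)
    (Θ : Set V) (hΘconv : Convex ℝ Θ) (hΘsym : ∀ θ ∈ Θ, -θ ∈ Θ)
    (Ul : V →ₗ[ℝ] ℝ) (ml : V →ₗ[ℝ] (Fin n → ℝ))
    (hPI : PartialId n ⇑Ul ⇑ml Θ)
    (w : Fin n → ℝ) (hw : w ≠ 0)
    (hbdd : ∀ γ ∈ Gam n ⇑ml Θ w, BddAbove (⇑Ul '' {θ ∈ Θ | w ⬝ᵥ ml θ = γ})) :
    (∀ γ ∈ Gam n ⇑ml Θ w, -γ ∈ Gam n ⇑ml Θ w) ∧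
    (0 : ℝ) ∈ interior (Gam n ⇑ml Θ w) ∧
    (superdiff n ⇑Ul ⇑ml Θ w).Nonempty ∧
    IsClosed (superdiff n ⇑Ul ⇑ml Θ w) ∧
    Bornology.IsBounded (superdiff n ⇑Ul ⇑ml Θ w) := by
  set Lw := dotProductBilin ℝ ℝ w
  have hΓ : Gam n ml Θ w = Lw '' (ml '' Θ) := (image_image _ _ _).symm
  have hsym : ∀ γ ∈ Gam n ml Θ w, -γ ∈ Gam n ml Θ w := by
    rintro _ ⟨θ, hθ, rfl⟩
    exact ⟨-θ, hΘsym θ hθ, by simp⟩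
  have hint : (interior (Gam n ml Θ w)).Nonempty := by
    rw [hΓ]
    exact (hPI.nonempty_interior_image.image Lw).mono
      ((Lw.isOpenMap_of_finiteDimensional (dotProductBilin_surjective hw)).image_interior_subset _)
  have h0 : (0 : ℝ) ∈ interior (Gam n ml Θ w) :=
    (hΘconv.linear_image (Lw ∘ₗ ml)).zero_mem_interior_of_neg_mem hsym hint
  have hconc : ConcaveOn ℝ (Gam n ml Θ w) (kbar n Ul ml Θ w) :=
    (Ul.concaveOn hΘconv).concaveOn_sSup_image_fiber (Lw ∘ₗ ml) hbdd
  rw [superdiff_eq_superdifferential]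
  exact ⟨hsym, h0, hconc.superdifferential_nonempty h0, isClosed_superdifferential _ _ _,
    isBounded_superdifferential h0⟩

/-- **Lemma (properties of the superdifferential).** Under nontrivial partial
identification and Assumption L, for a nonzero `w` with `k̄_w` finite on `Γ_w`: `Γ_w` is
symmetric about `0`, `0` lies in its interior, and `∂k̄_w(0)` is nonempty, closed, and
bounded. -/
theorem superdifferential_properties
    {V : Type*} [AddCommGroup V] [Module ℝ V]
    (n : ℕ)
    (Θ : Set V) (hΘne : Θ.Nonempty) (hΘconv : Convex ℝ Θ) (hΘsym : ∀ θ ∈ Θ, -θ ∈ Θ)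
    (Ul : V →ₗ[ℝ] ℝ) (ml : V →ₗ[ℝ] (Fin n → ℝ))
    (hPI : PartialId n ⇑Ul ⇑ml Θ)
    (w : Fin n → ℝ) (hw : w ≠ 0)
    (hbdd : ∀ γ ∈ Gam n ⇑ml Θ w, BddAbove (⇑Ul '' {θ ∈ Θ | w ⬝ᵥ ml θ = γ})) :
    (∀ γ ∈ Gam n ⇑ml Θ w, -γ ∈ Gam n ⇑ml Θ w) ∧
    (0 : ℝ) ∈ interior (Gam n ⇑ml Θ w) ∧
    (superdiff n ⇑Ul ⇑ml Θ w).Nonempty ∧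
    IsClosed (superdiff n ⇑Ul ⇑ml Θ w) ∧
    Bornology.IsBounded (superdiff n ⇑Ul ⇑ml Θ w) :=
  superdifferential_properties_general n Θ hΘconv hΘsym Ul ml hPI w hw hbdd
end
end
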